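/- arXiv:2602.04397 — 3 statements merged into one kernel-verified Lean document; each statement's English description precedes it below -/
import Mathlib

section
/- Let $n > 1$, $v \in \{-1,1\}^{n-1}$ with $\sum_k v_k = 0$, and $0 < \gamma < \beta < 1/2$. Define distributions on $n$ points: $P = (\frac{\beta+\gamma\beta v_1}{n-1}, \dots, \frac{\beta+\gamma\beta v_{n-1}}{n-1}, 1-\beta)$ and $Q = (\frac{\beta}{n-1}, \dots, \frac{\beta}{n-1}, 1-\beta)$. Then the Kullback–Leibler divergence satisfies $\mathrm{KL}(P, Q) \le 2\beta\gamma^2$. -/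
/-!
Since `log x ≤ x - 1`, each term satisfies `p log (p/q) ≤ p (p/q - 1)`, and when `∑ p = ∑ q`
these bounds sum to the χ²-divergence `∑ (p - q)² / q`. For the perturbed instance the last
coordinates agree and each of the other `m` coordinates contributes `(γ β / m)² / (β / m) = β γ² / m`,
so `KL(P, Q) ≤ β γ²`.
-/

open Finset Real

theorem mul_log_div_le_mul_div_sub_one {p q : ℝ} (hp : 0 ≤ p) (hq : 0 < q) :
    p * log (p / q) ≤ p * (p / q - 1) := by
  rcases hp.eq_or_lt with rfl | hp
  · simp
  · exact mul_le_mul_of_nonneg_left (log_le_sub_one_of_pos (div_pos hp hq)) hp.le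

theorem sum_mul_log_div_le_sum_sq_div {ι : Type*} [Fintype ι] {p q : ι → ℝ}
    (hp : ∀ i, 0 ≤ p i) (hq : ∀ i, 0 < q i) (hpq : ∑ i, p i = ∑ i, q i) :
    ∑ i, p i * log (p i / q i) ≤ ∑ i, (p i - q i) ^ 2 / q i := by
  have hterm : ∀ i, p i * (p i / q i - 1) = (p i - q i) ^ 2 / q i + (p i - q i) := fun i => by
    field_simp [(hq i).ne']
    ring
  calc ∑ i, p i * log (p i / q i) ≤ ∑ i, p i * (p i / q i - 1) :=
        sum_le_sum fun i _ => mul_log_div_le_mul_div_sub_one (hp i) (hq i)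
    _ = ∑ i, (p i - q i) ^ 2 / q i := by
        simp only [hterm, sum_add_distrib, sum_sub_distrib, hpq, sub_self, add_zero]

theorem sum_fin_div_card_le {m : ℕ} {c : ℝ} (hc : 0 ≤ c) : ∑ _k : Fin m, c / m ≤ c := by
  rw [sum_const, card_univ, Fintype.card_fin, nsmul_eq_mul]
  rcases m.eq_zero_or_pos with rfl | hm
  · simpa using hc
  · rw [mul_div_cancel₀ _ (by positivity)]

theorem kl_divergence_perturbed_instance_general
    (m : ℕ) (β γ : ℝ) (hγ : 0 < γ) (hγβ : γ < β) (hβ : β < 1/2)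
    (v : Fin m → ℝ) (hv : ∀ k, v k = 1 ∨ v k = -1) (hsum : ∑ k, v k = 0)
    (P Q : Fin (m + 1) → ℝ)
    (hP : ∀ i : Fin (m + 1), P i = if h : (i : ℕ) < m then (β + γ * β * v ⟨i, h⟩) / m else 1 - β)
    (hQ : ∀ i : Fin (m + 1), Q i = if (i : ℕ) < m then β / m else 1 - β) :
    ∑ i, P i * Real.log (P i / Q i) ≤ 2 * β * γ ^ 2 := by
  have hβ0 : 0 < β := hγ.trans hγβ
  have hPk : ∀ k : Fin m, P k.castSucc = (β + γ * β * v k) / m := fun k => by simp [hP]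
  have hQk : ∀ k : Fin m, Q k.castSucc = β / m := fun k => by simp [hQ]
  have hPl : P (Fin.last m) = 1 - β := by simp [hP]
  have hQl : Q (Fin.last m) = 1 - β := by simp [hQ]
  have hm0 : ∀ k : Fin m, (0 : ℝ) < m := fun k => by exact_mod_cast k.pos
  have hv_sq : ∀ k, v k ^ 2 = 1 := fun k => by rcases hv k with h | h <;> simp [h]
  have hP0 : ∀ i, 0 ≤ P i := Fin.lastCases (by rw [hPl]; linarith) fun k => by
    rw [hPk]
    have : -1 ≤ v k := by rcases hv k with h | h <;> linarith
    exact div_nonneg (by nlinarith [mul_pos hγ hβ0]) (hm0 k).le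
  have hQ0 : ∀ i, 0 < Q i := Fin.lastCases (by rw [hQl]; linarith) fun k => by
    rw [hQk]; exact div_pos hβ0 (hm0 k)
  have hPQ : ∑ i, P i = ∑ i, Q i := by
    simp only [Fin.sum_univ_castSucc, hPk, hQk, hPl, hQl, ← sum_div, sum_add_distrib, ← mul_sum,
      hsum, mul_zero, add_zero]
  calc ∑ i, P i * log (P i / Q i) ≤ ∑ i, (P i - Q i) ^ 2 / Q i :=
        sum_mul_log_div_le_sum_sq_div hP0 hQ0 hPQ
    _ = ∑ _k : Fin m, β * γ ^ 2 / m := by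
        simp only [Fin.sum_univ_castSucc, hPl, hQl, sub_self, hPk, hQk]
        rw [zero_pow two_ne_zero, zero_div, add_zero]
        refine sum_congr rfl fun k _ => ?_
        field_simp [(hm0 k).ne', hβ0.ne']
        linear_combination γ ^ 2 * hv_sq k
    _ ≤ β * γ ^ 2 := sum_fin_div_card_le (by positivity)
    _ ≤ 2 * β * γ ^ 2 := by nlinarith

/-- KL divergence bound between the perturbed and unperturbed instances:
`KL(P, Q) ≤ 2 β γ²` where `P` puts mass `(β + γ β v_k)/(n-1)` on the first `n-1`
points and `1-β` on the last, and `Q` puts mass `β/(n-1)` and `1-β`. -/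
theorem kl_divergence_perturbed_instance
    (m : ℕ) (hm : 1 ≤ m) (β γ : ℝ) (hγ : 0 < γ) (hγβ : γ < β) (hβ : β < 1/2)
    (v : Fin m → ℝ) (hv : ∀ k, v k = 1 ∨ v k = -1) (hsum : ∑ k, v k = 0)
    (P Q : Fin (m + 1) → ℝ)
    (hP : ∀ i : Fin (m + 1), P i = if h : (i : ℕ) < m then (β + γ * β * v ⟨i, h⟩) / m else 1 - β)
    (hQ : ∀ i : Fin (m + 1), Q i = if (i : ℕ) < m then β / m else 1 - β) :
    ∑ i, P i * Real.log (P i / Q i) ≤ 2 * β * γ ^ 2 :=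
  kl_divergence_perturbed_instance_general m β γ hγ hγβ hβ v hv hsum P Q hP hQ
end

section
/- Fix $n \ge 1$, vectors $x, \hat{x}, y \in \Delta_n$, and $0.1 > 0$. Suppose $A \in [-1,1]^{n\times n}$ satisfies $x^\top A y \le e_i^\top A y + 0.1$ for all $i \in [n]$. Let $g = \max_{i} (\hat{x}^\top A y - e_i^\top A y)$, and suppose $g > 0.1$. Define $\hat{A} = (0.1/g) A$. Then $\hat{A} \in [-1,1]^{n\times n}$, $\hat{x}^\top \hat{A} y \le e_i^\top \hat{A} y + 0.1$ for all $i$, and $\|A - \hat{A}\|_\infty \le 2 (\hat{x} - x)^\top A y / 0.1$. -/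
/-- Multiplicative matrix construction for approximate equilibria: rescaling a feasible
matrix by `α/g` yields a matrix feasible for the empirical strategy, at distance at most
`2 (x̂ - x)ᵀ A y / α`. -/
theorem multiplicative_construction_approx
    (n : ℕ) (hn : 1 ≤ n) (α : ℝ) (hα : 0 < α)
    (x xh y : Fin n → ℝ)
    (hx0 : ∀ i, 0 ≤ x i) (hx1 : ∑ i, x i = 1)
    (hxh0 : ∀ i, 0 ≤ xh i) (hxh1 : ∑ i, xh i = 1)
    (hy0 : ∀ j, 0 ≤ y j) (hy1 : ∑ j, y j = 1)
    (A : Matrix (Fin n) (Fin n) ℝ) (hA : ∀ i j, A i j ∈ Set.Icc (-1 : ℝ) 1)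
    (hNash : ∀ i, (∑ i', ∑ j, x i' * A i' j * y j) ≤ (∑ j, A i j * y j) + α)
    (g : ℝ)
    (hg_ub : ∀ i, (∑ i', ∑ j, xh i' * A i' j * y j) - (∑ j, A i j * y j) ≤ g)
    (hg_mem : ∃ i, g = (∑ i', ∑ j, xh i' * A i' j * y j) - (∑ j, A i j * y j))
    (hgα : α < g)
    (Ah : Matrix (Fin n) (Fin n) ℝ) (hAh : ∀ i j, Ah i j = (α / g) * A i j) :
    (∀ i j, Ah i j ∈ Set.Icc (-1 : ℝ) 1) ∧
    (∀ i, (∑ i', ∑ j, xh i' * Ah i' j * y j) ≤ (∑ j, Ah i j * y j) + α) ∧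
    (∀ i j, |A i j - Ah i j| ≤ 2 * (∑ i', ∑ j', (xh i' - x i') * A i' j' * y j') / α) := by
  have hg0 : (0:ℝ) < g := hα.trans hgα
  have hr0 : 0 ≤ α / g := le_of_lt (div_pos hα hg0)
  have hr1 : α / g ≤ 1 := (div_le_one hg0).mpr (le_of_lt hgα)
  refine ⟨?_, ?_, ?_⟩
  · intro i j
    have h := hA i j
    rw [Set.mem_Icc] at h ⊢
    rw [hAh]
    constructor
    · nlinarith [h.1, h.2]
    · nlinarith [h.1, h.2]
  · intro i
    have hsum : (∑ i', ∑ j, xh i' * Ah i' j * y j)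
        = (α/g) * (∑ i', ∑ j, xh i' * A i' j * y j) := by
      rw [Finset.mul_sum]
      refine Finset.sum_congr rfl fun i' _ => ?_
      rw [Finset.mul_sum]
      refine Finset.sum_congr rfl fun j _ => ?_
      rw [hAh]; ring
    have hsum2 : (∑ j, Ah i j * y j) = (α/g) * (∑ j, A i j * y j) := by
      rw [Finset.mul_sum]
      refine Finset.sum_congr rfl fun j _ => ?_
      rw [hAh]; ring
    rw [hsum, hsum2]
    have h1 := hg_ub i
    have h2 := mul_le_mul_of_nonneg_left h1 hr0
    have h3 : (α/g) * g = α := div_mul_cancel₀ α (ne_of_gt hg0)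
    nlinarith
  · intro i j
    obtain ⟨i0, hi0⟩ := hg_mem
    have hD : (∑ i', ∑ j', (xh i' - x i') * A i' j' * y j')
        = (∑ i', ∑ j', xh i' * A i' j' * y j') - (∑ i', ∑ j', x i' * A i' j' * y j') := by
      rw [← Finset.sum_sub_distrib]
      refine Finset.sum_congr rfl fun i' _ => ?_
      rw [← Finset.sum_sub_distrib]
      refine Finset.sum_congr rfl fun j' _ => ?_
      ring
    have hN := hNash i0
    have hDge : g - α ≤ (∑ i', ∑ j', (xh i' - x i') * A i' j' * y j') := by
      rw [hD]; linarith [hi0, hN]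
    have h := hA i j
    rw [Set.mem_Icc] at h
    have key : A i j - Ah i j = ((g-α)/g) * A i j := by
      rw [hAh]; field_simp
    have habsA : |A i j| ≤ 1 := abs_le.mpr ⟨h.1, h.2⟩
    have hnn : 0 ≤ (g-α)/g := div_nonneg (by linarith) hg0.le
    have habs : |A i j - Ah i j| ≤ (g-α)/g := by
      rw [key, abs_mul, abs_of_nonneg hnn]
      calc (g-α)/g * |A i j| ≤ (g-α)/g * 1 :=
            mul_le_mul_of_nonneg_left habsA hnn
        _ = (g-α)/g := mul_one _
    refine habs.trans ?_
    rw [div_le_div_iff₀ hg0 hα]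
    nlinarith [hDge, hg0, hα, hgα]
end

section
/- Let $x, y, \hat{x}, \hat{y} \in \Delta_n$, $A \in [-1,1]^{n\times n}$ with $x^\top A y \le e_i^\top A y$ for all $i$, and suppose $\mathrm{supp}(x) = \mathrm{supp}(\hat{x})$. Define $\Delta = 2\|y - \hat{y}\|_1$, $S^\star = \mathrm{argmax}_{k \in \mathrm{supp}(x)} (A\hat{y})_k$, $\Delta_i = \max_{k \in \mathrm{supp}(x)} (A\hat{y})_k - (A\hat{y})_i$, and $\hat{A}_{ij} = A_{ij}/(1+\Delta)$ if $i \in S^\star$, $\hat{A}_{ij} = (A_{ij}+\Delta_i)/(1+\Delta)$ if $i \in \mathrm{supp}(x) \setminus S^\star$, and $\hat{A}_{ij} = (A_{ij}+\Delta)/(1+\Delta)$ if $i \notin \mathrm{supp}(x)$. Then $\hat{A} \in [-1,1]^{n\times n}$, $\hat{x}^\top \hat{A} \hat{y} \le e_i^\top \hat{A}\hat{y}$ for all $i \in [n]$, and $\|A - \hat{A}\|_\infty \le 4\|y - \hat{y}\|_1$. -/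
/-- Alternative matrix construction for exact equilibria in general-sum games: if
`supp(x) = supp(x̂)` and `A` is feasible for `(x,y)`, then the explicitly constructed
matrix `Â` is feasible for `(x̂,ŷ)` and satisfies `‖A - Â‖_∞ ≤ 4 ‖y - ŷ‖₁`. -/
theorem alternative_matrix_construction_exact
    (n : ℕ) (x y xh yh : Fin n → ℝ)
    (hx0 : ∀ i, 0 ≤ x i) (hx1 : ∑ i, x i = 1)
    (hy0 : ∀ j, 0 ≤ y j) (hy1 : ∑ j, y j = 1)
    (hxh0 : ∀ i, 0 ≤ xh i) (hxh1 : ∑ i, xh i = 1)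
    (hyh0 : ∀ j, 0 ≤ yh j) (hyh1 : ∑ j, yh j = 1)
    (A : Matrix (Fin n) (Fin n) ℝ) (hA : ∀ i j, A i j ∈ Set.Icc (-1 : ℝ) 1)
    (hNash : ∀ i, (∑ i', ∑ j, x i' * A i' j * y j) ≤ ∑ j, A i j * y j)
    (hsupp : ∀ i, 0 < x i ↔ 0 < xh i)
    (Δ : ℝ) (hΔ : Δ = 2 * ∑ j, |y j - yh j|)
    (M : ℝ) (hM : IsGreatest {t : ℝ | ∃ k, 0 < x k ∧ t = ∑ j, yh j * A k j} M)
    (Ah : Matrix (Fin n) (Fin n) ℝ)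
    (hAh : ∀ i j, Ah i j =
      if 0 < x i then
        (if (∑ j', yh j' * A i j') = M then A i j / (1 + Δ)
         else (A i j + (M - ∑ j', yh j' * A i j')) / (1 + Δ))
      else (A i j + Δ) / (1 + Δ)) :
    (∀ i j, Ah i j ∈ Set.Icc (-1 : ℝ) 1) ∧
    (∀ i, (∑ i', ∑ j, xh i' * Ah i' j * yh j) ≤ ∑ j, Ah i j * yh j) ∧
    (∀ i j, |A i j - Ah i j| ≤ 4 * ∑ j', |y j' - yh j'|) := by
  set δ : ℝ := ∑ j, |y j - yh j| with hδ
  have hδ0 : 0 ≤ δ := Finset.sum_nonneg fun j _ => abs_nonneg _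
  have hΔ0 : 0 ≤ Δ := by rw [hΔ]; linarith
  have hden : (0:ℝ) < 1 + Δ := by linarith
  set S : Fin n → ℝ := fun i => ∑ j, yh j * A i j with hS
  set c : Fin n → ℝ := fun i =>
    if 0 < x i then (if S i = M then 0 else M - S i) else Δ with hc
  have hAhc : ∀ i j, Ah i j = (A i j + c i) / (1 + Δ) := by
    intro i j
    rw [hAh]
    simp only [hc, hS]
    split_ifs with h1 h2
    · simp
    · rfl
    · rfl
  have happrox : ∀ i, |S i - ∑ j, A i j * y j| ≤ δ := by
    intro i
    have h1 : S i - ∑ j, A i j * y j = ∑ j, (yh j - y j) * A i j := by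
      simp only [hS]
      rw [← Finset.sum_sub_distrib]
      exact Finset.sum_congr rfl fun j _ => by ring
    rw [h1]
    calc |∑ j, (yh j - y j) * A i j| ≤ ∑ j, |(yh j - y j) * A i j| :=
          Finset.abs_sum_le_sum_abs _ _
      _ ≤ ∑ j, |y j - yh j| := by
          refine Finset.sum_le_sum fun j _ => ?_
          rw [abs_mul, abs_sub_comm]
          have h2 : |A i j| ≤ 1 := abs_le.2 ⟨(hA i j).1, (hA i j).2⟩
          nlinarith [abs_nonneg (y j - yh j)]
  set v : ℝ := ∑ i', ∑ j, x i' * A i' j * y j with hv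
  have hsum_v : ∑ i', x i' * ∑ j, A i' j * y j = v := by
    rw [hv]
    exact Finset.sum_congr rfl fun i _ => by
      rw [Finset.mul_sum]; exact Finset.sum_congr rfl fun j _ => by ring
  have hval : ∀ i, 0 < x i → ∑ j, A i j * y j = v := by
    intro i hi
    have hnn : ∀ i' ∈ Finset.univ, 0 ≤ x i' * ((∑ j, A i' j * y j) - v) :=
      fun i' _ => mul_nonneg (hx0 i') (by linarith [hNash i'])
    have hzero : ∑ i', x i' * ((∑ j, A i' j * y j) - v) = 0 := by
      have h3 : ∑ i', x i' * ((∑ j, A i' j * y j) - v)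
          = (∑ i', x i' * ∑ j, A i' j * y j) - (∑ i', x i') * v := by
        rw [Finset.sum_mul, ← Finset.sum_sub_distrib]
        exact Finset.sum_congr rfl fun _ _ => by ring
      rw [h3, hsum_v, hx1]; ring
    have h4 := (Finset.sum_eq_zero_iff_of_nonneg hnn).1 hzero i (Finset.mem_univ i)
    rcases mul_eq_zero.1 h4 with h | h
    · exact absurd h (ne_of_gt hi)
    · linarith
  obtain ⟨k, hk, hMk⟩ := hM.1
  have hMkS : M = S k := by simpa [hS] using hMk
  have hlow : ∀ i, M - Δ ≤ S i := by
    intro i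
    have h1 := abs_le.1 (happrox k)
    have h2 := abs_le.1 (happrox i)
    have h3 := hval k hk
    have h4 := hNash i
    rw [hΔ]
    
    rw [hMkS]
    linarith
  have hupp : ∀ i, 0 < x i → S i ≤ M := by
    intro i hi
    exact hM.2 ⟨i, hi, by simp [hS]⟩
  have hc0 : ∀ i, 0 ≤ c i := by
    intro i
    simp only [hc]
    split_ifs with h1 h2
    · exact le_rfl
    · linarith [hupp i h1]
    · exact hΔ0
  have hcΔ : ∀ i, c i ≤ Δ := by
    intro i
    simp only [hc]
    split_ifs with h1 h2
    · exact hΔ0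
    · linarith [hlow i]
    · exact le_rfl
  have hMc : ∀ i, M ≤ S i + c i := by
    intro i
    simp only [hc]
    split_ifs with h1 h2
    · linarith [h2.ge]
    · linarith
    · linarith [hlow i]
  have hMceq : ∀ i, 0 < x i → S i + c i = M := by
    intro i hi
    simp only [hc]
    simp only [hi, if_true]
    split_ifs with h2
    · linarith
    · ring
  have hrow : ∀ i, ∑ j, Ah i j * yh j = (S i + c i) / (1 + Δ) := by
    intro i
    have h1 : ∀ j, Ah i j * yh j = (A i j * yh j + c i * yh j) / (1 + Δ) := by
      intro j; rw [hAhc]; ring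
    simp only [h1]
    rw [← Finset.sum_div, Finset.sum_add_distrib, ← Finset.mul_sum, hyh1, mul_one]
    have h2 : ∑ j, A i j * yh j = S i := by
      simp only [hS]; exact Finset.sum_congr rfl fun j _ => mul_comm _ _
    rw [h2]
  have hLHS : (∑ i', ∑ j, xh i' * Ah i' j * yh j) = M / (1 + Δ) := by
    have h1 : ∀ i', ∑ j, xh i' * Ah i' j * yh j = xh i' * ((S i' + c i') / (1 + Δ)) := by
      intro i'
      rw [← hrow i', Finset.mul_sum]
      exact Finset.sum_congr rfl fun j _ => by ring
    simp only [h1]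
    have h2 : ∀ i' ∈ Finset.univ, xh i' * ((S i' + c i') / (1 + Δ))
        = xh i' * (M / (1 + Δ)) := by
      intro i' _
      rcases (hxh0 i').lt_or_eq with h | h
      · rw [hMceq i' ((hsupp i').2 h)]
      · rw [← h]; ring
    rw [Finset.sum_congr rfl h2, ← Finset.sum_mul, hxh1, one_mul]
  refine ⟨?_, ?_, ?_⟩
  · intro i j
    rw [hAhc]
    have h1 := (hA i j).1
    have h2 := (hA i j).2
    have h3 := hc0 i
    have h4 := hcΔ i
    constructor
    · rw [le_div_iff₀ hden]; nlinarith
    · rw [div_le_iff₀ hden]; nlinarith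
  · intro i
    rw [hLHS, hrow i]
    gcongr
    exact hMc i
  · intro i j
    rw [hAhc]
    have h1 := (hA i j).1
    have h2 := (hA i j).2
    have h3 := hc0 i
    have h4 := hcΔ i
    have key : A i j - (A i j + c i) / (1 + Δ) = (A i j * Δ - c i) / (1 + Δ) := by
      field_simp; ring
    rw [key, abs_div, abs_of_pos hden, div_le_iff₀ hden]
    rw [abs_le] at *
    constructor <;> nlinarith [hΔ, hδ0]
end
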